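/- (Completeness and size of witness lists) Let k ≥ 4, n ≥ 3, and m ∈ ℕ with A k n < m. Then there exists a witness list L below m whose last entry is (k,n,0), whose length is at most (log^(4)(m))^3, and such that every entry (u,v,w) of L satisfies u < log^(4)(m), v < log^(4)(m), and w < log^(4)(m), where log^(4) is the fourth iterate of the ceiling base-2 logarithm. -/

import Mathlib

def A : ℕ → ℕ → ℕ
  | 0, n => 2 ^ n
  | _ + 1, 0 => 1
  | k + 1, n + 1 => A k (A (k + 1) n)

lemma A_zero_fst (n : ℕ) : A 0 n = 2 ^ n := by simp [A]

lemma A_zero_snd (u : ℕ) : A u 0 = 1 := by cases u <;> simp [A]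

lemma A_succ_succ (u n : ℕ) : A (u + 1) (n + 1) = A u (A (u + 1) n) := by simp [A]

lemma A_pos (u : ℕ) : ∀ n, 0 < A u n := by
  induction u with
  | zero => intro n; rw [A_zero_fst]; positivity
  | succ u ih =>
    intro n
    cases n with
    | zero => norm_num [A_zero_snd]
    | succ n => rw [A_succ_succ]; exact ih _

lemma lt_A (u : ℕ) : ∀ n, n < A u n := by
  induction u with
  | zero => intro n; rw [A_zero_fst]; exact Nat.lt_two_pow_self (n := n)
  | succ u ihu =>
    intro n
    induction n with
    | zero => norm_num [A_zero_snd]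
    | succ n ihn =>
      rw [A_succ_succ]
      have h1 : n + 1 ≤ A (u + 1) n := ihn
      have h2 : A (u + 1) n < A u (A (u + 1) n) := ihu _
      omega

lemma A_strictMono (u : ℕ) : StrictMono (A u) := by
  apply strictMono_nat_of_lt_succ
  intro n
  cases u with
  | zero =>
    rw [A_zero_fst, A_zero_fst]
    exact Nat.pow_lt_pow_right (by norm_num) (Nat.lt_succ_self n)
  | succ u => rw [A_succ_succ]; exact lt_A u _

lemma A_mono (u : ℕ) : Monotone (A u) := (A_strictMono u).monotone

lemma A_le_succ_fst (u n : ℕ) : A u n ≤ A (u + 1) n := by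
  cases n with
  | zero => rw [A_zero_snd, A_zero_snd]
  | succ n =>
    rw [A_succ_succ]
    exact A_mono u (lt_A (u + 1) n)

lemma A_mono_fst {u u' : ℕ} (h : u ≤ u') (n : ℕ) : A u n ≤ A u' n := by
  induction h with
  | refl => exact le_refl _
  | step h ih => exact le_trans ih (A_le_succ_fst _ _)

lemma two_pow_le_A (u n : ℕ) : 2 ^ n ≤ A u n := by
  rw [← A_zero_fst]; exact A_mono_fst (Nat.zero_le u) n

lemma A_one (u : ℕ) : A u 1 = 2 := by
  induction u with
  | zero => rw [A_zero_fst]; norm_num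
  | succ u ih => rw [show (1:ℕ) = 0 + 1 from rfl, A_succ_succ, A_zero_snd, ih]

lemma A_two (u : ℕ) : A u 2 = 4 := by
  induction u with
  | zero => rw [A_zero_fst]; norm_num
  | succ u ih => rw [show (2:ℕ) = 1 + 1 from rfl, A_succ_succ, A_one, ih]

lemma A2_le_A4 : ∀ j, 1 ≤ j → A 2 (j + 1) ≤ A j 4 := by
  intro j
  induction j with
  | zero => omega
  | succ j ih =>
    intro _
    rcases Nat.eq_zero_or_pos j with h | hj
    · subst h
      calc A 2 (0 + 1 + 1) = 4 := A_two 2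
        _ ≤ 2 ^ 4 := by norm_num
        _ ≤ A (0 + 1) 4 := two_pow_le_A 1 4
    · have h2 : A (j + 1) 3 = A j 4 := by
        rw [show (3:ℕ) = 2 + 1 from rfl, A_succ_succ, A_two]
      calc A 2 (j + 1 + 1) = A 1 (A 2 (j + 1)) := A_succ_succ 1 (j+1)
        _ ≤ A j (A 2 (j + 1)) := A_mono_fst hj _
        _ ≤ A j (A j 4) := A_mono j (ih hj)
        _ = A j (A (j+1) 3) := by rw [h2]
        _ = A (j + 1) 4 := (A_succ_succ j 3).symm

lemma A2_lt_A : ∀ k n, 4 ≤ k → 3 ≤ n → A 2 k ≤ A k n := by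
  intro k n hk hn
  obtain ⟨j, rfl⟩ : ∃ j, k = j + 1 := ⟨k - 1, by omega⟩
  calc A 2 (j + 1) ≤ A j 4 := A2_le_A4 j (by omega)
    _ = A (j + 1) 3 := by rw [show (3:ℕ) = 2 + 1 from rfl, A_succ_succ, A_two]
    _ ≤ A (j + 1) n := A_mono _ hn

def IsWitnessList (m : ℕ) (L : List (ℕ × ℕ × ℕ)) : Prop :=
  ∀ i < L.length,
    (∃ v, L.getD i (0, 0, 0) = (0, v, 2 ^ v)) ∨
    (∃ v, L.getD i (0, 0, 0) = (v, 0, 1)) ∨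
    (∃ v, L.getD i (0, 0, 0) = (3, v, 0) ∧ A 3 v < m) ∨
    (∃ u v w, 1 ≤ u ∧ 1 ≤ v ∧ L.getD i (0, 0, 0) = (u, v, w) ∧
      ∃ j < i, ∃ j' < i, ∃ w' > 0,
        L.getD j (0, 0, 0) = (u, v - 1, w') ∧ L.getD j' (0, 0, 0) = (u - 1, w', w))

def Leaf (m : ℕ) (e : ℕ × ℕ × ℕ) : Prop :=
  (∃ v, e = (0, v, 2 ^ v)) ∨ (∃ v, e = (v, 0, 1)) ∨ (∃ v, e = (3, v, 0) ∧ A 3 v < m)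

def Der (L : List (ℕ × ℕ × ℕ)) (e : ℕ × ℕ × ℕ) : Prop :=
  ∃ u v w, 1 ≤ u ∧ 1 ≤ v ∧ e = (u, v, w) ∧
    ∃ w' > 0, (u, v - 1, w') ∈ L ∧ (u - 1, w', w) ∈ L

lemma mem_getD {L : List (ℕ × ℕ × ℕ)} {x} (hx : x ∈ L) :
    ∃ j < L.length, L.getD j (0, 0, 0) = x := by
  obtain ⟨j, hj, hx⟩ := List.mem_iff_getElem.mp hx
  exact ⟨j, hj, by rw [List.getD_eq_getElem _ _ hj, hx]⟩

lemma wit_nil (m : ℕ) : IsWitnessList m [] := by intro i hi; simp at hi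

lemma wit_snoc {m : ℕ} {L : List (ℕ × ℕ × ℕ)} {e} (h : IsWitnessList m L)
    (he : Leaf m e ∨ Der L e) : IsWitnessList m (L ++ [e]) := by
  intro i hi
  rw [List.length_append, List.length_singleton] at hi
  have hgd : ∀ j < L.length, (L ++ [e]).getD j (0,0,0) = L.getD j (0,0,0) := by
    intro j hj
    rw [List.getD_eq_getElem _ _ (by rw [List.length_append]; omega),
      List.getElem_append_left hj, List.getD_eq_getElem _ _ hj]
  rcases Nat.lt_or_ge i L.length with hiL | hiL
  · rw [hgd i hiL]
    rcases h i hiL with h1 | h2 | h3 | h4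
    · exact Or.inl h1
    · exact Or.inr (Or.inl h2)
    · exact Or.inr (Or.inr (Or.inl h3))
    · obtain ⟨u, v, w, hu, hv, heq, j, hj, j', hj', w', hw', hA, hB⟩ := h4
      refine Or.inr (Or.inr (Or.inr ⟨u, v, w, hu, hv, heq, j, hj, j', hj', w', hw', ?_, ?_⟩))
      · rw [hgd j (by omega)]; exact hA
      · rw [hgd j' (by omega)]; exact hB
  · have hieq : i = L.length := by omega
    have hge : (L ++ [e]).getD i (0,0,0) = e := by
      subst hieq
      rw [List.getD_eq_getElem _ _ (by simp), List.getElem_append_right (le_refl _)]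
      simp
    rw [hge]
    rcases he with hl | hd
    · rcases hl with h1 | h2 | h3
      · exact Or.inl h1
      · exact Or.inr (Or.inl h2)
      · exact Or.inr (Or.inr (Or.inl h3))
    · obtain ⟨u, v, w, hu, hv, heq, w', hw', hA, hB⟩ := hd
      obtain ⟨j, hj, hAj⟩ := mem_getD hA
      obtain ⟨j', hj', hBj⟩ := mem_getD hB
      refine Or.inr (Or.inr (Or.inr ⟨u, v, w, hu, hv, heq, j, by omega, j', by omega,
        w', hw', ?_, ?_⟩))
      · rw [hgd j hj]; exact hAj
      · rw [hgd j' hj']; exact hBj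

def table (u t : ℕ) : List (ℕ × ℕ × ℕ) := (List.range (t + 1)).map fun v => (u, v, A u v)

lemma table_succ (u t : ℕ) :
    table u (t + 1) = table u t ++ [(u, t + 1, A u (t + 1))] := by
  simp [table, List.range_succ]

lemma table_mem {u v t : ℕ} (hv : v ≤ t) : (u, v, A u v) ∈ table u t := by
  simp only [table, List.mem_map, List.mem_range]
  exact ⟨v, by omega, rfl⟩

lemma table_len (u t : ℕ) : (table u t).length = t + 1 := by simp [table]

lemma mem_table_ex {u t : ℕ} {x} (hx : x ∈ table u t) :
    ∃ v ≤ t, x = (u, v, A u v) := by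
  simp only [table, List.mem_map, List.mem_range] at hx
  obtain ⟨v, hv, rfl⟩ := hx
  exact ⟨v, by omega, rfl⟩

lemma wit_table_zero {m : ℕ} {P : List (ℕ × ℕ × ℕ)} (hP : IsWitnessList m P) (t : ℕ) :
    IsWitnessList m (P ++ table 0 t) := by
  induction t with
  | zero =>
    exact wit_snoc hP (Or.inl (Or.inl ⟨0, by simp [A_zero_fst]⟩))
  | succ t ih =>
    rw [table_succ, ← List.append_assoc]
    exact wit_snoc ih (Or.inl (Or.inl ⟨t + 1, by rw [A_zero_fst]⟩))

lemma wit_table_pos {m u : ℕ} {P : List (ℕ × ℕ × ℕ)} (hu : 1 ≤ u)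
    (hP : IsWitnessList m P) (t : ℕ)
    (hstep : ∀ v < t, ((u - 1 : ℕ), A u v, A u (v + 1)) ∈ P) :
    IsWitnessList m (P ++ table u t) := by
  induction t with
  | zero =>
    exact wit_snoc hP (Or.inl (Or.inr (Or.inl ⟨u, by simp [A_zero_snd]⟩)))
  | succ t ih =>
    rw [table_succ, ← List.append_assoc]
    refine wit_snoc (ih (fun v hv => hstep v (by omega))) (Or.inr ?_)
    refine ⟨u, t + 1, A u (t + 1), hu, by omega, rfl, A u t, A_pos u t, ?_, ?_⟩
    · have : (u, t, A u t) ∈ table u t := table_mem (le_refl t)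
      simpa using Or.inr this
    · exact List.mem_append_left _ (hstep t (by omega))

def Zd (k n : ℕ) : ℕ → ℕ
  | 0 => n
  | d + 1 => A (k - d) (Zd k n d - 1)

def T2 (k n : ℕ) : ℕ := A 3 (Zd k n (k - 3) - 2)
def T1 (k n : ℕ) : ℕ := A 2 (T2 k n - 1)
def T0 (k n : ℕ) : ℕ := A 1 (T1 k n - 1)

def Tl (k n u : ℕ) : ℕ :=
  if u = 0 then T0 k n else if u = 1 then T1 k n else if u = 2 then T2 k n
  else Zd k n (k - u) - 1

lemma Tl_big (k n u : ℕ) (hu : 3 ≤ u) : Tl k n u = Zd k n (k - u) - 1 := by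
  simp only [Tl]
  rw [if_neg (by omega), if_neg (by omega), if_neg (by omega)]

lemma Tl_zero (k n : ℕ) : Tl k n 0 = A 1 (Tl k n 1 - 1) := by simp [Tl, T0, T1]
lemma Tl_one (k n : ℕ) : Tl k n 1 = A 2 (Tl k n 2 - 1) := by simp [Tl, T1, T2]
lemma Tl_two (k n : ℕ) : Tl k n 2 = A 3 (Zd k n (k - 3) - 2) := by simp [Tl, T2]

lemma Zd_ge (k n : ℕ) (hn : 3 ≤ n) : ∀ d, 3 ≤ Zd k n d := by
  intro d
  induction d with
  | zero => exact hn
  | succ d ih =>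
    show 3 ≤ A (k - d) (Zd k n d - 1)
    calc (3:ℕ) ≤ 2 ^ 2 := by norm_num
      _ ≤ 2 ^ (Zd k n d - 1) := Nat.pow_le_pow_right (by norm_num) (by omega)
      _ ≤ A (k - d) (Zd k n d - 1) := two_pow_le_A _ _

lemma Zd_le_succ (k n : ℕ) (d : ℕ) : Zd k n d ≤ Zd k n (d + 1) := by
  show Zd k n d ≤ A (k - d) (Zd k n d - 1)
  calc Zd k n d ≤ 2 ^ (Zd k n d - 1) := by
        rcases Nat.eq_zero_or_pos (Zd k n d) with h | h
        · rw [h]; exact Nat.zero_le _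
        · have := Nat.lt_two_pow_self (n := Zd k n d - 1); omega
    _ ≤ A (k - d) (Zd k n d - 1) := two_pow_le_A _ _

lemma Zd_mono (k n : ℕ) {d d' : ℕ} (h : d ≤ d') : Zd k n d ≤ Zd k n d' := by
  induction h with
  | refl => exact le_refl _
  | step h ih => exact le_trans ih (Zd_le_succ k n _)

lemma Zd_inv (k n : ℕ) (hn : 3 ≤ n) : ∀ d ≤ k - 3, A (k - d) (Zd k n d) = A k n := by
  intro d
  induction d with
  | zero => intro _; simp [Zd]
  | succ d ih =>
    intro hd
    have hd' : d ≤ k - 3 := by omega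
    have hz : 3 ≤ Zd k n d := Zd_ge k n hn d
    have hk : k - d = (k - (d + 1)) + 1 := by omega
    calc A (k - (d + 1)) (Zd k n (d + 1))
        = A (k - (d + 1)) (A ((k - (d + 1)) + 1) (Zd k n d - 1)) := by
          rw [← hk]; simp [Zd]
      _ = A ((k - (d + 1)) + 1) ((Zd k n d - 1) + 1) := (A_succ_succ _ _).symm
      _ = A (k - d) (Zd k n d) := by rw [← hk]; congr 1; omega
      _ = A k n := ih hd'

lemma Tstep (k n : ℕ) (hn : 3 ≤ n) {u : ℕ} (hu : u < k) :
    A (u + 1) (Tl k n (u + 1) - 1) ≤ Tl k n u := by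
  have hz3 : 3 ≤ Zd k n (k - 3) := Zd_ge k n hn _
  match u with
  | 0 => rw [Tl_zero]
  | 1 => rw [Tl_one]
  | 2 =>
    rw [Tl_two, Tl_big k n 3 (by omega)]
    have : Zd k n (k - 3) - 1 - 1 = Zd k n (k - 3) - 2 := by omega
    rw [this]
  | (w + 3) =>
    set u := w + 3 with hw
    set d := k - (u + 1) with hd
    have hzd : 3 ≤ Zd k n d := Zd_ge k n hn d
    have hkd : k - d = u + 1 := by omega
    have hZ : Zd k n (k - u) = A (u + 1) (Zd k n d - 1) := by
      have h1 : k - u = d + 1 := by omega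
      rw [h1]
      show A (k - d) (Zd k n d - 1) = _
      rw [hkd]
    rw [Tl_big k n (u + 1) (by omega), Tl_big k n u (by omega), hZ, ← hd]
    have hlt : A (u + 1) (Zd k n d - 1 - 1) < A (u + 1) (Zd k n d - 1) :=
      A_strictMono (u + 1) (by omega)
    omega

def Ftab (k n : ℕ) : ℕ → List (ℕ × ℕ × ℕ)
  | 0 => table 0 (Tl k n 0)
  | u + 1 => Ftab k n u ++ table (u + 1) (Tl k n (u + 1))

lemma Ftab_mem (k n : ℕ) {u v U : ℕ} (hu : u ≤ U) (hv : v ≤ Tl k n u) :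
    (u, v, A u v) ∈ Ftab k n U := by
  induction U with
  | zero =>
    have : u = 0 := by omega
    subst this
    exact table_mem hv
  | succ U ih =>
    show _ ∈ Ftab k n U ++ _
    rcases Nat.lt_or_ge u (U + 1) with h | h
    · exact List.mem_append_left _ (ih (by omega))
    · have : u = U + 1 := by omega
      subst this
      exact List.mem_append_right _ (table_mem hv)

lemma mem_Ftab_ex (k n : ℕ) {U : ℕ} {x} (hx : x ∈ Ftab k n U) :
    ∃ u ≤ U, ∃ v ≤ Tl k n u, x = (u, v, A u v) := by
  induction U with
  | zero =>
    obtain ⟨v, hv, rfl⟩ := mem_table_ex hx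
    exact ⟨0, le_refl _, v, hv, rfl⟩
  | succ U ih =>
    rcases List.mem_append.mp hx with h | h
    · obtain ⟨u, hu, v, hv, rfl⟩ := ih h
      exact ⟨u, by omega, v, hv, rfl⟩
    · obtain ⟨v, hv, rfl⟩ := mem_table_ex h
      exact ⟨U + 1, le_refl _, v, hv, rfl⟩

lemma Ftab_wit (k n m : ℕ) (hn : 3 ≤ n) : ∀ U ≤ k, IsWitnessList m (Ftab k n U) := by
  intro U
  induction U with
  | zero =>
    intro _
    have := wit_table_zero (wit_nil m) (Tl k n 0)
    simpa [Ftab] using this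
  | succ U ih =>
    intro hU
    refine wit_table_pos (by omega) (ih (by omega)) _ ?_
    intro v hv
    have hA1 : A (U + 1) (v + 1) = A U (A (U + 1) v) := A_succ_succ U v
    have hargle : A (U + 1) v ≤ Tl k n U := by
      calc A (U + 1) v ≤ A (U + 1) (Tl k n (U + 1) - 1) := A_mono _ (by omega)
        _ ≤ Tl k n U := Tstep k n hn (by omega)
    have : ((U + 1 - 1 : ℕ), A (U + 1) v, A (U + 1) (v + 1)) = (U, A (U+1) v, A U (A (U+1) v)) := by
      rw [hA1]; norm_num
    rw [this]
    exact Ftab_mem k n (le_refl U) hargle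

def Cch (k n : ℕ) : ℕ → List (ℕ × ℕ × ℕ)
  | 0 => [(3, Zd k n (k - 3), 0)]
  | e + 1 => Cch k n e ++ [(3 + (e + 1), Zd k n (k - 3 - (e + 1)), 0)]

lemma Cch_top (k n e : ℕ) : ((3 + e : ℕ), Zd k n (k - 3 - e), 0) ∈ Cch k n e := by
  cases e with
  | zero => simp [Cch]
  | succ e => exact List.mem_append_right _ (by simp)

lemma mem_Cch_ex (k n : ℕ) {e : ℕ} {x} (hx : x ∈ Cch k n e) :
    ∃ i ≤ e, x = ((3 + i : ℕ), Zd k n (k - 3 - i), 0) := by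
  induction e with
  | zero =>
    simp only [Cch, List.mem_singleton] at hx
    exact ⟨0, le_refl _, by simpa using hx⟩
  | succ e ih =>
    rcases List.mem_append.mp hx with h | h
    · obtain ⟨i, hi, rfl⟩ := ih h
      exact ⟨i, by omega, rfl⟩
    · exact ⟨e + 1, le_refl _, by simpa using h⟩

lemma Cch_len (k n e : ℕ) : (Cch k n e).length = e + 1 := by
  induction e with
  | zero => rfl
  | succ e ih => simp [Cch, ih]

lemma chain_wit (k n m : ℕ) (hk : 4 ≤ k) (hn : 3 ≤ n) (h : A k n < m) :
    ∀ e ≤ k - 3, IsWitnessList m (Ftab k n k ++ Cch k n e) := by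
  intro e
  induction e with
  | zero =>
    intro _
    refine wit_snoc (Ftab_wit k n m hn k (le_refl k)) (Or.inl (Or.inr (Or.inr ⟨Zd k n (k - 3), rfl, ?_⟩)))
    have := Zd_inv k n hn (k - 3) (le_refl _)
    rw [show k - (k - 3) = 3 by omega] at this
    omega
  | succ e ih =>
    intro he
    rw [show Cch k n (e + 1) = Cch k n e ++ _ from rfl, ← List.append_assoc]
    refine wit_snoc (ih (by omega)) (Or.inr ?_)
    set d := k - 3 - (e + 1) with hd
    have hzd : 3 ≤ Zd k n d := Zd_ge k n hn d
    refine ⟨3 + (e + 1), Zd k n d, 0, by omega, by omega, rfl,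
      A (3 + (e + 1)) (Zd k n d - 1), A_pos _ _, ?_, ?_⟩
    · -- (3+(e+1), Zd d - 1, A (3+(e+1)) (Zd d - 1)) ∈ Ftab k n k
      apply List.mem_append_left
      refine Ftab_mem k n (by omega) ?_
      rw [Tl_big k n (3 + (e + 1)) (by omega)]
      have : k - (3 + (e + 1)) = d := by omega
      rw [this]
    · -- (3 + (e+1) - 1, w', 0) = (3 + e, Zd (k-3-e), 0) ∈ Cch k n e
      apply List.mem_append_right
      have hw' : A (3 + (e + 1)) (Zd k n d - 1) = Zd k n (k - 3 - e) := by
        have h1 : k - 3 - e = d + 1 := by omega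
        have h2 : k - d = 3 + (e + 1) := by omega
        rw [h1]
        show _ = A (k - d) (Zd k n d - 1)
        rw [h2]
      rw [show (3 + (e + 1) - 1 : ℕ) = 3 + e by omega, hw']
      exact Cch_top k n e

section Bounds

variable (k n : ℕ)

lemma e2 (hn : 3 ≤ n) : A 2 (T2 k n) = A 3 (Zd k n (k - 3) - 1) := by
  have hz3 : 3 ≤ Zd k n (k - 3) := Zd_ge k n hn _
  rw [T2, show Zd k n (k - 3) - 1 = (Zd k n (k - 3) - 2) + 1 by omega, A_succ_succ]

lemma e1 (hn : 3 ≤ n) : A 1 (T1 k n) = A 3 (Zd k n (k - 3) - 1) := by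
  have hpos : 1 ≤ T2 k n := A_pos _ _
  rw [← e2 k n hn, T1, show T2 k n = (T2 k n - 1) + 1 by omega]
  rw [A_succ_succ]
  congr 2

lemma e0 (hn : 3 ≤ n) : A 0 (T0 k n) = A 3 (Zd k n (k - 3) - 1) := by
  have hpos : 1 ≤ T1 k n := A_pos _ _
  rw [← e1 k n hn, T0, show T1 k n = (T1 k n - 1) + 1 by omega]
  rw [A_succ_succ]
  congr 2

lemma hA2X (hk : 4 ≤ k) (hn : 3 ≤ n) :
    A 2 (A 3 (Zd k n (k - 3) - 1)) = A k n := by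
  have hz3 : 3 ≤ Zd k n (k - 3) := Zd_ge k n hn _
  have h1 : A 3 (Zd k n (k - 3)) = A k n := by
    have := Zd_inv k n hn (k - 3) (le_refl _)
    rwa [show k - (k - 3) = 3 by omega] at this
  rw [← h1, show Zd k n (k - 3) = (Zd k n (k - 3) - 1) + 1 by omega]
  rw [A_succ_succ]
  congr 2

lemma Tl_le_X (hk : 4 ≤ k) (hn : 3 ≤ n) {u : ℕ} (hu : u ≤ k) :
    Tl k n u ≤ A 3 (Zd k n (k - 3) - 1) := by
  have hz3 : 3 ≤ Zd k n (k - 3) := Zd_ge k n hn _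
  match u with
  | 0 =>
    have h1 := lt_A 0 (T0 k n)
    have h2 := e0 k n hn
    show T0 k n ≤ _
    omega
  | 1 =>
    have h1 := lt_A 1 (T1 k n)
    have h2 := e1 k n hn
    show T1 k n ≤ _
    omega
  | 2 =>
    show T2 k n ≤ _
    rw [T2]
    exact A_mono 3 (by omega)
  | (w + 3) =>
    rw [Tl_big k n _ (by omega)]
    have h1 : Zd k n (k - (w + 3)) ≤ Zd k n (k - 3) := Zd_mono k n (by omega)
    have h2 : Zd k n (k - 3) - 1 < A 3 (Zd k n (k - 3) - 1) := lt_A 3 _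
    omega

lemma val_le_X (hk : 4 ≤ k) (hn : 3 ≤ n) {u : ℕ} (hu : u ≤ k) :
    A u (Tl k n u) ≤ A 3 (Zd k n (k - 3) - 1) := by
  have hz3 : 3 ≤ Zd k n (k - 3) := Zd_ge k n hn _
  match u with
  | 0 => exact le_of_eq (e0 k n hn)
  | 1 => exact le_of_eq (e1 k n hn)
  | 2 => exact le_of_eq (e2 k n hn)
  | 3 => rw [Tl_big k n 3 (by omega)]
  | (w + 4) =>
    rw [Tl_big k n _ (by omega)]
    have h1 : A (w + 4) (Zd k n (k - (w + 4)) - 1) = Zd k n ((k - (w + 4)) + 1) := by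
      show _ = A (k - (k - (w + 4))) (Zd k n (k - (w + 4)) - 1)
      rw [show k - (k - (w + 4)) = w + 4 by omega]
    rw [h1]
    have h2 : Zd k n ((k - (w + 4)) + 1) ≤ Zd k n (k - 3) := Zd_mono k n (by omega)
    have h3 : Zd k n (k - 3) - 1 < A 3 (Zd k n (k - 3) - 1) := lt_A 3 _
    omega

end Bounds

lemma pow_aux : ∀ X : ℕ, 4 ≤ X → X + 4 ≤ 2 ^ (X - 1) := by
  intro X
  induction X with
  | zero => omega
  | succ X ih =>
    intro hX
    rcases Nat.lt_or_ge X 4 with h | h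
    · have hX3 : X = 3 := by omega
      subst hX3; norm_num
    · have h1 := ih h
      have h2 : 2 ^ (X + 1 - 1) = 2 * 2 ^ (X - 1) := by
        rw [show X + 1 - 1 = (X - 1) + 1 by omega, pow_succ]
        ring
      omega

lemma clog_A1 {z : ℕ} (hz : 1 ≤ z) : Nat.clog 2 (A 1 z) = A 1 (z - 1) := by
  rw [show z = (z - 1) + 1 by omega, A_succ_succ, A_zero_fst,
    Nat.clog_pow 2 _ (by norm_num)]
  congr 1

lemma clog_bound {X m : ℕ} (hX : 4 ≤ X) (hm : A 2 X < m) :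
    X < (Nat.clog 2)^[4] m := by
  have hy2 : 2 ^ (X - 1) ≤ A 2 (X - 1) := two_pow_le_A _ _
  have hpow : X + 4 ≤ 2 ^ (X - 1) := pow_aux X hX
  have hy : X + 4 ≤ A 2 (X - 1) := le_trans hpow hy2
  set y := A 2 (X - 1) with hydef
  have hA2 : A 2 X = A 1 y := by
    rw [show X = (X - 1) + 1 by omega, A_succ_succ]
  have h1 : A 1 (y - 1) ≤ Nat.clog 2 m := by
    calc A 1 (y - 1) = Nat.clog 2 (A 1 y) := (clog_A1 (by omega)).symm
      _ ≤ Nat.clog 2 m := Nat.clog_mono_right 2 (by omega)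
  have h2 : A 1 (y - 2) ≤ Nat.clog 2 (Nat.clog 2 m) := by
    calc A 1 (y - 2) = Nat.clog 2 (A 1 (y - 1)) := by
          rw [clog_A1 (by omega)]
          congr 1
      _ ≤ _ := Nat.clog_mono_right 2 h1
  have h3 : A 1 (y - 3) ≤ Nat.clog 2 (Nat.clog 2 (Nat.clog 2 m)) := by
    calc A 1 (y - 3) = Nat.clog 2 (A 1 (y - 2)) := by
          rw [clog_A1 (by omega)]
          congr 1
      _ ≤ _ := Nat.clog_mono_right 2 h2
  have h4 : A 1 (y - 4) ≤ Nat.clog 2 (Nat.clog 2 (Nat.clog 2 (Nat.clog 2 m))) := by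
    calc A 1 (y - 4) = Nat.clog 2 (A 1 (y - 3)) := by
          rw [clog_A1 (by omega)]
          congr 1
      _ ≤ _ := Nat.clog_mono_right 2 h3
  have h5 : y - 4 < A 1 (y - 4) := lt_A 1 _
  have h6 : (Nat.clog 2)^[4] m = Nat.clog 2 (Nat.clog 2 (Nat.clog 2 (Nat.clog 2 m))) := rfl
  omega

lemma Ftab_len (k n X : ℕ) :
    ∀ U, (∀ u ≤ U, Tl k n u ≤ X) → (Ftab k n U).length ≤ (U + 1) * (X + 1) := by
  intro U
  induction U with
  | zero =>
    intro hT
    show (table 0 (Tl k n 0)).length ≤ _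
    rw [table_len]
    have := hT 0 (le_refl _)
    omega
  | succ U ih =>
    intro hT
    show (Ftab k n U ++ table (U + 1) (Tl k n (U + 1))).length ≤ _
    rw [List.length_append, table_len]
    have h1 := ih (fun u hu => hT u (by omega))
    have h2 := hT (U + 1) (le_refl _)
    have h3 : (U + 1 + 1) * (X + 1) = (U + 1) * (X + 1) + (X + 1) := by ring
    omega

theorem witnessList_complete (k n m : ℕ) (hk : 4 ≤ k) (hn : 3 ≤ n) (h : A k n < m) :
    ∃ L : List (ℕ × ℕ × ℕ), IsWitnessList m L ∧
      L.getLast? = some (k, n, 0) ∧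
      L.length ≤ ((Nat.clog 2)^[4] m) ^ 3 ∧
      ∀ u v w, (u, v, w) ∈ L →
        u < (Nat.clog 2)^[4] m ∧ v < (Nat.clog 2)^[4] m ∧ w < (Nat.clog 2)^[4] m := by
  have hz3 : 3 ≤ Zd k n (k - 3) := Zd_ge k n hn _
  set X := A 3 (Zd k n (k - 3) - 1) with hXdef
  set B := (Nat.clog 2)^[4] m with hBdef
  have hZ3X : Zd k n (k - 3) - 1 < X := lt_A 3 _
  have hX4 : 4 ≤ X := by
    calc (4:ℕ) = A 3 2 := (A_two 3).symm
      _ ≤ X := A_mono 3 (by omega)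
  have hA2Xkn : A 2 X = A k n := hA2X k n hk hn
  have hXB : X < B := clog_bound hX4 (by omega)
  have hkX : k ≤ X := by
    have h1 : A 2 k ≤ A k n := A2_lt_A k n hk hn
    rw [← hA2Xkn] at h1
    exact (A_strictMono 2).le_iff_le.mp h1
  refine ⟨Ftab k n k ++ Cch k n (k - 3),
    chain_wit k n m hk hn h (k - 3) (le_refl _), ?_, ?_, ?_⟩
  · obtain ⟨e, he⟩ : ∃ e, k - 3 = e + 1 := ⟨k - 4, by omega⟩
    rw [he, show Cch k n (e + 1)
        = Cch k n e ++ [(3 + (e + 1), Zd k n (k - 3 - (e + 1)), 0)] from rfl,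
      ← List.append_assoc, List.getLast?_concat]
    have h30 : (3 + (e + 1) : ℕ) = k := by omega
    have h0 : k - 3 - (e + 1) = 0 := by omega
    rw [h30, h0, show Zd k n 0 = n by simp [Zd]]
  · rw [List.length_append, Cch_len]
    have hF := Ftab_len k n X k (fun u hu => Tl_le_X k n hk hn hu)
    have h1 : (k + 1) * (X + 1) ≤ B * B :=
      Nat.mul_le_mul (by omega) (by omega)
    have h2 : B * B + B ≤ B * B * B := by nlinarith
    have h3 : B ^ 3 = B * B * B := by ring
    omega
  · rintro u v w hmem
    rcases List.mem_append.mp hmem with hf | hc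
    · obtain ⟨u', hu', v', hv', heq⟩ := mem_Ftab_ex k n hf
      simp only [Prod.mk.injEq] at heq
      obtain ⟨rfl, rfl, rfl⟩ := heq
      have hTle : Tl k n u ≤ X := Tl_le_X k n hk hn hu'
      have hval : A u (Tl k n u) ≤ X := val_le_X k n hk hn hu'
      have hwle : A u v ≤ A u (Tl k n u) := A_mono u hv'
      exact ⟨by omega, by omega, by omega⟩
    · obtain ⟨i, hi, heq⟩ := mem_Cch_ex k n hc
      simp only [Prod.mk.injEq] at heq
      obtain ⟨rfl, rfl, rfl⟩ := heq
      have hvz : Zd k n (k - 3 - i) ≤ Zd k n (k - 3) := Zd_mono k n (by omega)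
      exact ⟨by omega, by omega, by omega⟩
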